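/- arXiv:2509.17900 — 3 statements merged into one kernel-verified Lean document; each statement's English description precedes it below -/
import Mathlib

section
/- The quotient of B_3(d) by the central subgroup generated by Δ² = (σ₁σ₂)³ is isomorphic to the von Dyck (orientation-preserving triangle) group Δ(2,3,d) = ⟨a, b | a² = b³ = (ab)^d = 1⟩. -/
/-- The relations of the truncated braid group
`B₃(d) = ⟨σ₁, σ₂ | σ₁σ₂σ₁ = σ₂σ₁σ₂, σ₁^d = σ₂^d = 1⟩`. -/
def truncatedBraid3Rels (d : ℕ) : Set (FreeGroup (Fin 2)) :=
  {FreeGroup.of 0 * FreeGroup.of 1 * FreeGroup.of 0 *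
      (FreeGroup.of 1 * FreeGroup.of 0 * FreeGroup.of 1)⁻¹,
   FreeGroup.of 0 ^ d, FreeGroup.of 1 ^ d}

/-- The truncated braid group `B₃(d)`. -/
def TruncatedBraid3 (d : ℕ) : Type := PresentedGroup (truncatedBraid3Rels d)

instance (d : ℕ) : Group (TruncatedBraid3 d) := inferInstanceAs (Group (PresentedGroup _))

/-- The generator `σ₁` of `B₃(d)`. -/
def TruncatedBraid3.σ₁ (d : ℕ) : TruncatedBraid3 d := PresentedGroup.of 0

/-- The generator `σ₂` of `B₃(d)`. -/
def TruncatedBraid3.σ₂ (d : ℕ) : TruncatedBraid3 d := PresentedGroup.of 1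

/-- The full twist `Δ² = (σ₁σ₂)³` in `B₃(d)`. -/
def TruncatedBraid3.fullTwist (d : ℕ) : TruncatedBraid3 d :=
  (TruncatedBraid3.σ₁ d * TruncatedBraid3.σ₂ d) ^ 3

/-- The von Dyck (orientation-preserving triangle) group
`Δ(2,3,d) = ⟨a, b | a² = b³ = (ab)^d = 1⟩`. -/
def VonDyck (d : ℕ) : Type :=
  PresentedGroup ({FreeGroup.of 0 ^ 2, FreeGroup.of 1 ^ 3,
    (FreeGroup.of 0 * FreeGroup.of 1) ^ d} : Set (FreeGroup (Fin 2)))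

instance (d : ℕ) : Group (VonDyck d) := inferInstanceAs (Group (PresentedGroup _))

/-!
Put `Δ = σ₁σ₂σ₁`. The braid relation gives `Δ² = (σ₁σ₂)³` and `Δ σ₁ = σ₂ Δ`, `Δ σ₂ = σ₁ Δ`, so
`Δ²` is central and its normal closure is the cyclic group it generates. In the quotient,
`a = Δ` and `b = (σ₁σ₂)⁻¹` satisfy `a² = b³ = 1`, and `ab = (σ₁σ₂) σ₁ (σ₁σ₂)⁻¹` is conjugate to
`σ₁`, so `(ab)^d = 1`. Conversely `σ₁ ↦ ba`, `σ₂ ↦ ab` respects the relations of `B₃(d)` and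
kills `(σ₁σ₂)³ = (b a a b)³ = b⁶`; the two maps are mutually inverse on generators.
-/

open Subgroup

theorem Subgroup.normalClosure_eq_closure_of_subset_center {G : Type*} [Group G] {s : Set G}
    (hs : s ⊆ center G) : normalClosure s = closure s := by
  have hle : closure s ≤ center G := (closure_le _).mpr hs
  have : (closure s).Normal := ⟨fun n hn g => by
    rw [mem_center_iff.mp (hle hn) g, mul_inv_cancel_right]; exact hn⟩
  exact le_antisymm (normalClosure_le_normal subset_closure) closure_le_normalClosure

section BraidRelation

variable {G : Type*} [Group G] {x y : G}

theorem braid_sq_eq_mul_pow_three (h : x * y * x = y * x * y) :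
    (x * y * x) ^ 2 = (x * y) ^ 3 := by
  rw [sq, pow_three]; nth_rewrite 2 [h]; simp only [mul_assoc]

theorem semiconjBy_braid_left (h : x * y * x = y * x * y) : SemiconjBy (x * y * x) x y := by
  rw [SemiconjBy]; nth_rewrite 1 [h]; group

theorem semiconjBy_braid_right (h : x * y * x = y * x * y) : SemiconjBy (x * y * x) y x := by
  rw [SemiconjBy]; nth_rewrite 2 [h]; group

theorem commute_mul_pow_three_left_of_braid (h : x * y * x = y * x * y) :
    Commute ((x * y) ^ 3) x := by
  rw [← braid_sq_eq_mul_pow_three h, sq]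
  exact (semiconjBy_braid_right h).mul_left (semiconjBy_braid_left h)

theorem commute_mul_pow_three_right_of_braid (h : x * y * x = y * x * y) :
    Commute ((x * y) ^ 3) y := by
  rw [← braid_sq_eq_mul_pow_three h, sq]
  exact (semiconjBy_braid_left h).mul_left (semiconjBy_braid_right h)

end BraidRelation

namespace TruncatedBraid3

variable {d : ℕ}

theorem braid : σ₁ d * σ₂ d * σ₁ d = σ₂ d * σ₁ d * σ₂ d := by
  have h := PresentedGroup.one_of_mem (rels := truncatedBraid3Rels d) (Set.mem_insert _ _)
  rw [map_mul, map_inv, mul_inv_eq_one] at h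
  exact h

theorem σ₁_pow : σ₁ d ^ d = 1 := by
  have h := PresentedGroup.one_of_mem (rels := truncatedBraid3Rels d) (x := FreeGroup.of 0 ^ d)
    (by simp [truncatedBraid3Rels])
  rwa [map_pow] at h

theorem σ₂_pow : σ₂ d ^ d = 1 := by
  have h := PresentedGroup.one_of_mem (rels := truncatedBraid3Rels d) (x := FreeGroup.of 1 ^ d)
    (by simp [truncatedBraid3Rels])
  rwa [map_pow] at h

section Lift

variable {G : Type*} [Group G] (x y : G) (hxy : x * y * x = y * x * y) (hx : x ^ d = 1)
  (hy : y ^ d = 1)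

def lift : TruncatedBraid3 d →* G :=
  PresentedGroup.toGroup (f := ![x, y]) (by
    simp only [truncatedBraid3Rels, Set.mem_insert_iff, Set.mem_singleton_iff]
    rintro r (rfl | rfl | rfl) <;> simp [hxy, hx, hy])

@[simp]
theorem lift_σ₁ : lift x y hxy hx hy (σ₁ d) = x := PresentedGroup.toGroup.of _

@[simp]
theorem lift_σ₂ : lift x y hxy hx hy (σ₂ d) = y := PresentedGroup.toGroup.of _

end Lift

theorem fullTwist_mem_center : fullTwist d ∈ center (TruncatedBraid3 d) := by
  have hgen : ∀ j, PresentedGroup.of j ∈ centralizer {fullTwist d} := by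
    rw [Fin.forall_fin_two]
    exact ⟨mem_centralizer_singleton_iff.mpr (commute_mul_pow_three_left_of_braid braid).symm.eq,
      mem_centralizer_singleton_iff.mpr (commute_mul_pow_three_right_of_braid braid).symm.eq⟩
  exact mem_center_iff.mpr fun g =>
    mem_centralizer_singleton_iff.mp (PresentedGroup.generated_by _ _ hgen g)

end TruncatedBraid3

namespace VonDyck

def a (d : ℕ) : VonDyck d := PresentedGroup.of 0

def b (d : ℕ) : VonDyck d := PresentedGroup.of 1

variable {d : ℕ}

theorem a_sq : a d ^ 2 = 1 := by
  have h := PresentedGroup.one_of_mem (x := FreeGroup.of 0 ^ 2) (by simp) (rels :=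
    ({FreeGroup.of 0 ^ 2, FreeGroup.of 1 ^ 3, (FreeGroup.of 0 * FreeGroup.of 1) ^ d} :
      Set (FreeGroup (Fin 2))))
  rw [map_pow] at h
  exact h

theorem b_cube : b d ^ 3 = 1 := by
  have h := PresentedGroup.one_of_mem (x := FreeGroup.of 1 ^ 3) (by simp) (rels :=
    ({FreeGroup.of 0 ^ 2, FreeGroup.of 1 ^ 3, (FreeGroup.of 0 * FreeGroup.of 1) ^ d} :
      Set (FreeGroup (Fin 2))))
  rw [map_pow] at h
  exact h

theorem a_mul_b_pow : (a d * b d) ^ d = 1 := by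
  have h := PresentedGroup.one_of_mem (x := (FreeGroup.of 0 * FreeGroup.of 1) ^ d) (by simp)
    (rels := ({FreeGroup.of 0 ^ 2, FreeGroup.of 1 ^ 3, (FreeGroup.of 0 * FreeGroup.of 1) ^ d} :
      Set (FreeGroup (Fin 2))))
  rw [map_pow, map_mul] at h
  exact h

theorem b_mul_a_pow : (b d * a d) ^ d = 1 := by
  have h : b d * a d = (a d)⁻¹ * (a d * b d) * (a d)⁻¹⁻¹ := by group
  rw [h, conj_pow, a_mul_b_pow, mul_one, inv_inv, inv_mul_cancel]

theorem b_mul_a_mul_a_mul_b : b d * a d * (a d * b d) = (b d)⁻¹ :=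
  calc b d * a d * (a d * b d) = b d * (a d * a d) * b d := by simp only [mul_assoc]
    _ = b d * b d := by rw [← sq, a_sq, mul_one]
    _ = (b d)⁻¹ := by rw [eq_inv_iff_mul_eq_one, ← b_cube, pow_three, mul_assoc]

theorem b_mul_a_mul_a_mul_b_mul_b_mul_a : b d * a d * (a d * b d) * (b d * a d) = a d := by
  rw [b_mul_a_mul_a_mul_b, inv_mul_cancel_left]

theorem a_mul_b_mul_b_mul_a_mul_a_mul_b : a d * b d * (b d * a d) * (a d * b d) = a d :=
  calc a d * b d * (b d * a d) * (a d * b d) = a d * b d * (b d * a d * (a d * b d)) := by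
        simp only [mul_assoc]
    _ = a d := by rw [b_mul_a_mul_a_mul_b, mul_inv_cancel_right]

section Lift

variable {G : Type*} [Group G] (x y : G) (hx : x ^ 2 = 1) (hy : y ^ 3 = 1) (hxy : (x * y) ^ d = 1)

def lift : VonDyck d →* G :=
  PresentedGroup.toGroup (f := ![x, y]) (by
    simp only [Set.mem_insert_iff, Set.mem_singleton_iff]
    rintro r (rfl | rfl | rfl) <;> simp [hx, hy, hxy])

@[simp]
theorem lift_a : lift x y hx hy hxy (a d) = x := PresentedGroup.toGroup.of _

@[simp]
theorem lift_b : lift x y hx hy hxy (b d) = y := PresentedGroup.toGroup.of _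

end Lift

end VonDyck

namespace TruncatedBraid3

def toVonDyck (d : ℕ) : TruncatedBraid3 d →* VonDyck d :=
  lift (VonDyck.b d * VonDyck.a d) (VonDyck.a d * VonDyck.b d)
    (VonDyck.b_mul_a_mul_a_mul_b_mul_b_mul_a.trans VonDyck.a_mul_b_mul_b_mul_a_mul_a_mul_b.symm)
    VonDyck.b_mul_a_pow VonDyck.a_mul_b_pow

variable {d : ℕ}

theorem toVonDyck_fullTwist : toVonDyck d (fullTwist d) = 1 := by
  rw [fullTwist, map_pow, map_mul, toVonDyck, lift_σ₁, lift_σ₂, VonDyck.b_mul_a_mul_a_mul_b,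
    inv_pow, VonDyck.b_cube, inv_one]

def quotientFullTwistToVonDyck :
    TruncatedBraid3 d ⧸ normalClosure {fullTwist d} →* VonDyck d :=
  QuotientGroup.lift _ (toVonDyck d)
    (normalClosure_le_normal (Set.singleton_subset_iff.mpr toVonDyck_fullTwist))

theorem mk_fullTwist :
    QuotientGroup.mk' (normalClosure {fullTwist d}) (fullTwist d) = 1 :=
  (QuotientGroup.eq_one_iff _).mpr (subset_normalClosure rfl)

def vonDyckToQuotientFullTwist :
    VonDyck d →* TruncatedBraid3 d ⧸ normalClosure {fullTwist d} :=
  let π := QuotientGroup.mk' (normalClosure {fullTwist d})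
  VonDyck.lift (π (σ₁ d * σ₂ d * σ₁ d)) (π (σ₁ d * σ₂ d))⁻¹
    (by rw [← map_pow, braid_sq_eq_mul_pow_three braid]; exact mk_fullTwist)
    (by rw [inv_pow, ← map_pow, inv_eq_one]; exact mk_fullTwist)
    (by rw [← map_inv, ← map_mul, ← map_pow, conj_pow, σ₁_pow, mul_one, mul_inv_cancel, map_one])

theorem quotientFullTwistToVonDyck_mk (g : TruncatedBraid3 d) :
    quotientFullTwistToVonDyck (QuotientGroup.mk' _ g) = toVonDyck d g :=
  QuotientGroup.lift_mk' _ _ g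

theorem vonDyckToQuotientFullTwist_a :
    vonDyckToQuotientFullTwist (VonDyck.a d) = QuotientGroup.mk' _ (σ₁ d * σ₂ d * σ₁ d) := by
  rw [vonDyckToQuotientFullTwist, VonDyck.lift_a]

theorem vonDyckToQuotientFullTwist_b :
    vonDyckToQuotientFullTwist (VonDyck.b d) = (QuotientGroup.mk' _ (σ₁ d * σ₂ d))⁻¹ := by
  rw [vonDyckToQuotientFullTwist, VonDyck.lift_b]

theorem vonDyckToQuotientFullTwist_comp_quotientFullTwistToVonDyck :
    vonDyckToQuotientFullTwist.comp quotientFullTwistToVonDyck =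
      MonoidHom.id (TruncatedBraid3 d ⧸ normalClosure {fullTwist d}) := by
  refine QuotientGroup.monoidHom_ext _ (PresentedGroup.ext (Fin.forall_fin_two.mpr ⟨?_, ?_⟩))
  · show vonDyckToQuotientFullTwist (quotientFullTwistToVonDyck (QuotientGroup.mk' _ (σ₁ d))) =
      QuotientGroup.mk' _ (σ₁ d)
    rw [quotientFullTwistToVonDyck_mk, toVonDyck, lift_σ₁, map_mul, vonDyckToQuotientFullTwist_a,
      vonDyckToQuotientFullTwist_b, ← map_inv, ← map_mul]
    group
  · show vonDyckToQuotientFullTwist (quotientFullTwistToVonDyck (QuotientGroup.mk' _ (σ₂ d))) =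
      QuotientGroup.mk' _ (σ₂ d)
    rw [quotientFullTwistToVonDyck_mk, toVonDyck, lift_σ₂, map_mul, vonDyckToQuotientFullTwist_a,
      vonDyckToQuotientFullTwist_b, ← map_inv, ← map_mul, braid]
    group

theorem quotientFullTwistToVonDyck_comp_vonDyckToQuotientFullTwist :
    quotientFullTwistToVonDyck.comp vonDyckToQuotientFullTwist = MonoidHom.id (VonDyck d) := by
  refine PresentedGroup.ext (Fin.forall_fin_two.mpr ⟨?_, ?_⟩)
  · show quotientFullTwistToVonDyck (vonDyckToQuotientFullTwist (VonDyck.a d)) = VonDyck.a d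
    rw [vonDyckToQuotientFullTwist_a, quotientFullTwistToVonDyck_mk, map_mul, map_mul, toVonDyck,
      lift_σ₁, lift_σ₂, VonDyck.b_mul_a_mul_a_mul_b_mul_b_mul_a]
  · show quotientFullTwistToVonDyck (vonDyckToQuotientFullTwist (VonDyck.b d)) = VonDyck.b d
    rw [vonDyckToQuotientFullTwist_b, map_inv, quotientFullTwistToVonDyck_mk, map_mul, toVonDyck,
      lift_σ₁, lift_σ₂, VonDyck.b_mul_a_mul_a_mul_b, inv_inv]

def quotientFullTwistEquivVonDyck :
    (TruncatedBraid3 d ⧸ normalClosure {fullTwist d}) ≃* VonDyck d :=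
  MonoidHom.toMulEquiv quotientFullTwistToVonDyck vonDyckToQuotientFullTwist
    vonDyckToQuotientFullTwist_comp_quotientFullTwistToVonDyck
    quotientFullTwistToVonDyck_comp_vonDyckToQuotientFullTwist

end TruncatedBraid3

open TruncatedBraid3 in
theorem truncatedBraid3_quotient_fullTwist_iso_vonDyck_general (d : ℕ) :
    Subgroup.normalClosure {TruncatedBraid3.fullTwist d} =
      Subgroup.closure {TruncatedBraid3.fullTwist d} ∧
    Nonempty ((TruncatedBraid3 d ⧸ Subgroup.normalClosure {TruncatedBraid3.fullTwist d}) ≃*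
      VonDyck d) :=
  ⟨normalClosure_eq_closure_of_subset_center (Set.singleton_subset_iff.mpr fullTwist_mem_center),
    ⟨quotientFullTwistEquivVonDyck⟩⟩

/-- The quotient of `B₃(d)` by the (central, hence normal) subgroup generated by
`Δ² = (σ₁σ₂)³` is isomorphic to the von Dyck group `Δ(2,3,d)`.  Since `Δ²` is
central, the subgroup it generates agrees with its normal closure. -/
theorem truncatedBraid3_quotient_fullTwist_iso_vonDyck (d : ℕ) (hd : 2 ≤ d) :
    Subgroup.normalClosure {TruncatedBraid3.fullTwist d} =
      Subgroup.closure {TruncatedBraid3.fullTwist d} ∧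
    Nonempty ((TruncatedBraid3 d ⧸ Subgroup.normalClosure {TruncatedBraid3.fullTwist d}) ≃*
      VonDyck d) :=
  truncatedBraid3_quotient_fullTwist_iso_vonDyck_general d
end

section
/- Two distinct regular orbits of the circle action ζ·(a,b) = (ζ²a, ζ³b) on the unit sphere S³ ⊂ ℂ² are disjoint (2,3)-torus knots, and their linking number in S³ is 6. -/
/-!
On `S³` the regular orbit of `(a', b')` is the zero set of the invariant
`g(z, w) = b'²z³ − a'³w²`: vanishing forces `|z|³/|w|² = |a'|³/|b'|²`, and this ratio is
strictly monotone in `|z|` on `S³`, so `(|z|, |w|) = (|a'|, |b'|)` and then `ζ = b'z / (wa')`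
moves `(z, w)` to `(a', b')`. Since `g(ζ²z, ζ³w) = ζ⁶ g(z, w)`, along another orbit `g` is a
nonzero constant times `exp(2πit)⁶`; by uniqueness of lifts through the covering `ℝ → S¹`,
every continuous angle of it gains `6 · 2π` over one period.
-/

/-- The unit 3-sphere in `ℂ²`. -/
def Sphere3 : Set (ℂ × ℂ) := {p | ‖p.1‖ ^ 2 + ‖p.2‖ ^ 2 = 1}

/-- The standard parametrization of the orbit of `(a,b)` under the circle action
`ζ·(a,b) = (ζ²a, ζ³b)`, with `ζ = exp(2πit)`. -/
noncomputable def orbitLoop (a b : ℂ) (t : ℝ) : ℂ × ℂ :=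
  (Complex.exp (2 * Real.pi * Complex.I * t) ^ 2 * a,
   Complex.exp (2 * Real.pi * Complex.I * t) ^ 3 * b)

/-- The orbit of `(a,b)` under the circle action, as a subset of `ℂ²`. -/
def orbitSet (a b : ℂ) : Set (ℂ × ℂ) :=
  {q | ∃ ζ : ℂ, ‖ζ‖ = 1 ∧ q = (ζ ^ 2 * a, ζ ^ 3 * b)}

open Complex Real

lemma eq_of_sq_eq_of_pow_three_eq {M : Type*} [CommMonoidWithZero M] [IsCancelMulZero M] {u v : M}
    (h2 : u ^ 2 = v ^ 2) (h3 : u ^ 3 = v ^ 3) : u = v := by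
  rcases eq_or_ne u 0 with rfl | hu
  · exact (pow_eq_zero_iff two_ne_zero).1 (by rw [← h2, zero_pow two_ne_zero]) |>.symm
  · refine mul_right_cancel₀ (pow_ne_zero 2 hu) ?_
    calc u * u ^ 2 = u ^ 3 := (pow_succ' u 2).symm
      _ = v ^ 3 := h3
      _ = v * v ^ 2 := pow_succ' v 2
      _ = v * u ^ 2 := by rw [h2]

-- `r ↦ r³ / s²` is strictly increasing along the circle `r² + s² = const`.
lemma eq_of_add_sq_eq_of_sq_mul_pow_three_eq {r s r' s' : ℝ} (hr : 0 ≤ r) (hs : 0 ≤ s)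
    (hr' : 0 ≤ r') (hs' : 0 ≤ s') (hsum : r ^ 2 + s ^ 2 = r' ^ 2 + s' ^ 2)
    (h : s' ^ 2 * r ^ 3 = r' ^ 3 * s ^ 2) : r = r' := by
  by_contra hne
  wlog hlt : r < r' generalizing r s r' s'
  · exact this hr' hs' hr hs hsum.symm (by linarith) (Ne.symm hne)
      (lt_of_le_of_ne (not_lt.1 hlt) (Ne.symm hne))
  have hss : s' ^ 2 < s ^ 2 := by nlinarith [pow_lt_pow_left₀ hlt hr two_ne_zero]
  have := mul_lt_mul'' hss (pow_lt_pow_left₀ hlt hr three_ne_zero) (by positivity) (by positivity)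
  linarith

def seifert (a' b' : ℂ) (p : ℂ × ℂ) : ℂ := b' ^ 2 * p.1 ^ 3 - a' ^ 3 * p.2 ^ 2

lemma mem_orbitSet_of_seifert_eq_zero {a b a' b' : ℂ} (h : (a, b) ∈ Sphere3)
    (h' : (a', b') ∈ Sphere3) (hb : b ≠ 0) (ha' : a' ≠ 0) (hg : seifert a' b' (a, b) = 0) :
    (a', b') ∈ orbitSet a b := by
  have heq : b' ^ 2 * a ^ 3 = a' ^ 3 * b ^ 2 := sub_eq_zero.1 hg
  have hnorm : ‖b'‖ ^ 2 * ‖a‖ ^ 3 = ‖a'‖ ^ 3 * ‖b‖ ^ 2 := by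
    simpa only [norm_mul, norm_pow] using congrArg norm heq
  have hsum : ‖a‖ ^ 2 + ‖b‖ ^ 2 = ‖a'‖ ^ 2 + ‖b'‖ ^ 2 := h.trans h'.symm
  have hA : ‖a‖ = ‖a'‖ := eq_of_add_sq_eq_of_sq_mul_pow_three_eq (norm_nonneg _)
    (norm_nonneg _) (norm_nonneg _) (norm_nonneg _) hsum hnorm
  have hB : ‖b‖ = ‖b'‖ := (sq_eq_sq₀ (norm_nonneg _) (norm_nonneg _)).1 (by
    rw [hA] at hsum; linarith)
  refine ⟨b' * a / (b * a'), ?_, ?_⟩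
  · rw [norm_div, norm_mul, norm_mul, ← hB, hA, div_self]
    simp [hb, ha']
  · ext
    · field_simp
      linear_combination -heq
    · field_simp
      linear_combination -b' * heq

lemma disjoint_orbitSet_of_notMem {a b a' b' : ℂ} (h : (a', b') ∉ orbitSet a b) :
    Disjoint (orbitSet a b) (orbitSet a' b') := by
  refine Set.disjoint_left.2 ?_
  rintro q ⟨ζ, hζ, rfl⟩ ⟨η, hη, heq⟩
  have hη0 : η ≠ 0 := norm_ne_zero_iff.1 (hη ▸ one_ne_zero)
  obtain ⟨h1, h2⟩ := Prod.mk.inj heq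
  refine h ⟨ζ / η, by rw [norm_div, hζ, hη, div_one], ?_⟩
  ext
  · field_simp
    linear_combination -h1
  · field_simp
    linear_combination -h2

lemma exp_two_pi_I_mul_eq_circleExp (t : ℝ) :
    exp (2 * π * I * t) = Circle.exp (2 * π * t) := by
  rw [Circle.coe_exp]
  push_cast
  ring_nf

lemma orbitLoop_mem_orbitSet (a b : ℂ) (t : ℝ) : orbitLoop a b t ∈ orbitSet a b :=
  ⟨_, by rw [exp_two_pi_I_mul_eq_circleExp, Circle.norm_coe], rfl⟩

lemma norm_orbitLoop (a b : ℂ) (t : ℝ) :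
    ‖(orbitLoop a b t).1‖ = ‖a‖ ∧ ‖(orbitLoop a b t).2‖ = ‖b‖ := by
  simp only [orbitLoop, norm_mul, norm_pow, exp_two_pi_I_mul_eq_circleExp, Circle.norm_coe,
    one_pow, one_mul, and_self]

lemma injOn_orbitLoop {a b : ℂ} (ha : a ≠ 0) (hb : b ≠ 0) :
    Set.InjOn (orbitLoop a b) (Set.Ico 0 1) := by
  intro t ht s hs hts
  obtain ⟨h1, h2⟩ := Prod.mk.inj hts
  have he : Circle.exp (2 * π * t) = Circle.exp (2 * π * s) := by
    ext
    simpa only [exp_two_pi_I_mul_eq_circleExp] using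
      eq_of_sq_eq_of_pow_three_eq (mul_right_cancel₀ ha h1) (mul_right_cancel₀ hb h2)
  have hmem : ∀ x ∈ Set.Ico (0 : ℝ) 1, 2 * π * x ∈ Set.Ico 0 (2 * π) := fun x hx =>
    ⟨by nlinarith [hx.1, pi_pos], by nlinarith [hx.2, pi_pos]⟩
  have := Circle.exp_injOn_Ico (by rw [sub_zero]) (hmem t ht) (hmem s hs) he
  exact mul_left_cancel₀ (by positivity) this

lemma seifert_orbitLoop (a b a' b' : ℂ) (t : ℝ) :
    seifert a' b' (orbitLoop a b t) = exp (2 * π * I * t) ^ 6 * seifert a' b' (a, b) := by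
  simp only [seifert, orbitLoop]
  ring

-- Uniqueness of lifts through the covering `Circle.exp : ℝ → Circle`.
lemma sub_eq_of_lift_exp_pow_mul {f : ℝ → ℂ} {n : ℕ} {c : ℂ} (hc : c ≠ 0)
    (hf : ∀ t : ℝ, f t = exp (2 * π * I * t) ^ n * c) {θ : ℝ → ℝ} (hθ : Continuous θ)
    (hlift : ∀ t : ℝ, f t = (‖f t‖ : ℂ) * exp (θ t * I)) :
    θ 1 - θ 0 = n * (2 * π) := by
  have hnorm : ∀ t, ‖f t‖ = ‖c‖ := fun t => by
    rw [hf, norm_mul, norm_pow, exp_two_pi_I_mul_eq_circleExp, Circle.norm_coe, one_pow, one_mul]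
  have hc0 : c = ‖c‖ * exp (θ 0 * I) := by simpa [hf, hnorm] using hlift 0
  have hexp : ∀ t, Circle.exp (θ t) = Circle.exp (θ 0 + 2 * π * n * t) := fun t => by
    ext
    rw [Circle.coe_exp, Circle.coe_exp]
    refine mul_left_cancel₀ (ofReal_ne_zero.2 (norm_ne_zero_iff.2 hc)) ?_
    calc (‖c‖ : ℂ) * exp (θ t * I) = f t := by rw [← hnorm t]; exact (hlift t).symm
      _ = exp (2 * π * I * t) ^ n * (‖c‖ * exp (θ 0 * I)) := by rw [hf, ← hc0]
      _ = ‖c‖ * exp (↑(θ 0 + 2 * π * n * t) * I) := by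
        rw [← Complex.exp_nat_mul, mul_left_comm, ← Complex.exp_add]
        push_cast
        ring_nf
  have hθ' := Circle.isCoveringMap_exp.eq_of_comp_eq hθ (by fun_prop) (funext hexp) 0
    (by simp)
  have := congrFun hθ' 1
  simp only [mul_one] at this
  linarith

/-- The linking number is computed as the winding number around `0`, along the first orbit,
of the Seifert function `g(z,w) = b'²z³ − a'³w²`, which cuts out the second orbit on `S³`. -/
theorem regular_orbits_disjoint_torus_knots_linking_six_general
    (a b a' b' : ℂ) (h : (a, b) ∈ Sphere3) (h' : (a', b') ∈ Sphere3)
    (ha : a ≠ 0) (hb : b ≠ 0) (ha' : a' ≠ 0)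
    (hdistinct : (a', b') ∉ orbitSet a b) :
    -- the two orbits are disjoint
    Disjoint (orbitSet a b) (orbitSet a' b') ∧
    -- each orbit is a knot lying on a standardly embedded torus: an injectively
    -- parametrized (2,3)-curve
    (∀ t s : ℝ, t ∈ Set.Ico (0 : ℝ) 1 → s ∈ Set.Ico (0 : ℝ) 1 →
      orbitLoop a b t = orbitLoop a b s → t = s) ∧
    (∀ t : ℝ, ‖(orbitLoop a b t).1‖ = ‖a‖ ∧
      ‖(orbitLoop a b t).2‖ = ‖b‖) ∧
    (∀ t : ℝ, orbitLoop a b t ∈ orbitSet a b) ∧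
    -- the Seifert function of the second orbit does not vanish on the first orbit
    (∀ t : ℝ, b' ^ 2 * (orbitLoop a b t).1 ^ 3 - a' ^ 3 * (orbitLoop a b t).2 ^ 2 ≠ 0) ∧
    -- linking number 6: any continuous angular lift of the Seifert function along
    -- the first orbit increases by `6 · 2π` over one period
    (∀ θ : ℝ → ℝ, Continuous θ →
      (∀ t : ℝ, b' ^ 2 * (orbitLoop a b t).1 ^ 3 - a' ^ 3 * (orbitLoop a b t).2 ^ 2 =
        ((‖b' ^ 2 * (orbitLoop a b t).1 ^ 3 -
          a' ^ 3 * (orbitLoop a b t).2 ^ 2‖ : ℝ) : ℂ) * Complex.exp (θ t * Complex.I)) →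
      θ 1 - θ 0 = 6 * (2 * Real.pi)) := by
  have hg : seifert a' b' (a, b) ≠ 0 := fun h0 =>
    hdistinct (mem_orbitSet_of_seifert_eq_zero h h' hb ha' h0)
  refine ⟨disjoint_orbitSet_of_notMem hdistinct, fun t s ht hs => injOn_orbitLoop ha hb ht hs,
    norm_orbitLoop a b, orbitLoop_mem_orbitSet a b, fun t => ?_, fun θ hθ hlift => ?_⟩
  · rw [← seifert, seifert_orbitLoop]
    exact mul_ne_zero (pow_ne_zero _ (exp_ne_zero _)) hg
  · exact_mod_cast sub_eq_of_lift_exp_pow_mul hg (seifert_orbitLoop a b a' b') hθ hlift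

/-- Two distinct regular orbits of the circle action `ζ·(a,b) = (ζ²a, ζ³b)` on
`S³ ⊂ ℂ²` are disjoint `(2,3)`-torus knots, and their linking number in `S³` is `6`.

Each orbit is a knot: its loop parametrization is injective on `[0,1)` and lies on
the torus `{|z₁| = |a|, |z₂| = |b|}`.  The linking number of the orbit of `(a,b)`
with the orbit of `(a',b')` is computed as the winding number around `0` of the
Seifert function `g(z,w) = b'²z³ − a'³w²` (which cuts out the second orbit on
`S³`) along the first orbit: any continuous angular lift `θ` of `t ↦ g(γ(t))`
gains `6·2π` as `t` runs from `0` to `1`. -/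
theorem regular_orbits_disjoint_torus_knots_linking_six
    (a b a' b' : ℂ) (h : (a, b) ∈ Sphere3) (h' : (a', b') ∈ Sphere3)
    (ha : a ≠ 0) (hb : b ≠ 0) (ha' : a' ≠ 0) (hb' : b' ≠ 0)
    (hdistinct : (a', b') ∉ orbitSet a b) :
    -- the two orbits are disjoint
    Disjoint (orbitSet a b) (orbitSet a' b') ∧
    -- each orbit is a knot lying on a standardly embedded torus: an injectively
    -- parametrized (2,3)-curve
    (∀ t s : ℝ, t ∈ Set.Ico (0 : ℝ) 1 → s ∈ Set.Ico (0 : ℝ) 1 →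
      orbitLoop a b t = orbitLoop a b s → t = s) ∧
    (∀ t : ℝ, ‖(orbitLoop a b t).1‖ = ‖a‖ ∧
      ‖(orbitLoop a b t).2‖ = ‖b‖) ∧
    (∀ t : ℝ, orbitLoop a b t ∈ orbitSet a b) ∧
    -- the Seifert function of the second orbit does not vanish on the first orbit
    (∀ t : ℝ, b' ^ 2 * (orbitLoop a b t).1 ^ 3 - a' ^ 3 * (orbitLoop a b t).2 ^ 2 ≠ 0) ∧
    -- linking number 6: any continuous angular lift of the Seifert function along
    -- the first orbit increases by `6 · 2π` over one period
    (∀ θ : ℝ → ℝ, Continuous θ →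
      (∀ t : ℝ, b' ^ 2 * (orbitLoop a b t).1 ^ 3 - a' ^ 3 * (orbitLoop a b t).2 ^ 2 =
        ((‖b' ^ 2 * (orbitLoop a b t).1 ^ 3 -
          a' ^ 3 * (orbitLoop a b t).2 ^ 2‖ : ℝ) : ℂ) * Complex.exp (θ t * Complex.I)) →
      θ 1 - θ 0 = 6 * (2 * Real.pi)) :=
  regular_orbits_disjoint_torus_knots_linking_six_general a b a' b' h h' ha hb ha' hdistinct
end

section
/- The map (a,b) ↦ [a³ : b²] from S³ ⊂ ℂ² to ℂP¹ is well-defined, continuous, and surjective, and its fibers are exactly the orbits of the S¹-action ζ·(a,b) = (ζ²a, ζ³b); hence it induces a homeomorphism S³/S¹ ≅ ℂP¹. -/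
open scoped LinearAlgebra.Projectivization

noncomputable instance : TopologicalSpace (ℙ ℂ (ℂ × ℂ)) :=
  inferInstanceAs (TopologicalSpace (Quotient (projectivizationSetoid ℂ (ℂ × ℂ))))

/-- Two points of `S³` lie in the same orbit of the circle action
`ζ·(a,b) = (ζ²a, ζ³b)`. -/
def SameOrbit (p q : Sphere3) : Prop :=
  ∃ ζ : ℂ, ‖ζ‖ = 1 ∧ (q : ℂ × ℂ) = (ζ ^ 2 * (p : ℂ × ℂ).1, ζ ^ 3 * (p : ℂ × ℂ).2)

/-!
Two points have the same image `[a³ : b²] = [a'³ : b'²]` exactly when `a³b'² = b²a'³`, and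
(for `(a, b) ≠ 0`) this happens exactly when `(a', b') = (t²a, t³b)` for some `t ∈ ℂ`: take
`t = (b'/b)/(a'/a)` when `ab ≠ 0`, and a square or cube root otherwise. Such a weighted scaling
multiplies `|a|² + |b|²` into `|t|⁴|a|² + |t|⁶|b|²`, which is strictly increasing in `|t|`, so on
`S³` it forces `|t| = 1`; by the intermediate value theorem every weighted ray meets `S³`, which
gives surjectivity. Finally `ℂP¹` is Hausdorff (the quotient map is open and the diagonal is
cut out by `v₁w₂ = v₂w₁`), so the induced continuous bijection from the compact `S³/S¹` is a
homeomorphism.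
-/

open Set Function

namespace Projectivization

theorem mk_eq_mk_iff_mul_eq_mul {K : Type*} [Field K] {v w : K × K} (hv : v ≠ 0) (hw : w ≠ 0) :
    mk K v hv = mk K w hw ↔ v.1 * w.2 = v.2 * w.1 := by
  rw [mk_eq_mk_iff']
  constructor
  · rintro ⟨c, rfl⟩
    simp only [Prod.smul_fst, Prod.smul_snd, smul_eq_mul]
    ring
  · intro h
    by_cases hw₁ : w.1 = 0
    · have hw₂ : w.2 ≠ 0 := fun hw₂ => hw (Prod.ext hw₁ hw₂)
      have hv₁ : v.1 = 0 := by simpa [hw₁, hw₂] using h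
      exact ⟨v.2 / w.2, Prod.ext (by simp [hw₁, hv₁]) (by simp [hw₂])⟩
    · refine ⟨v.1 / w.1, Prod.ext (by simp [hw₁]) ?_⟩
      simp only [Prod.smul_snd, smul_eq_mul]
      field_simp
      linear_combination h

section OpenQuotient

variable {K V : Type*} [DivisionRing K] [AddCommGroup V] [Module K V] [TopologicalSpace V]
  [ContinuousConstSMul K V]

theorem isOpenQuotientMap_quotientMk :
    IsOpenQuotientMap (Quotient.mk (projectivizationSetoid K V)) := by
  refine ⟨Quotient.mk_surjective, continuous_quot_mk, fun U hU => ?_⟩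
  obtain ⟨W, hW, rfl⟩ := isOpen_induced_iff.mp hU
  rw [isOpen_coinduced]
  have : Quotient.mk (projectivizationSetoid K V) ⁻¹'
      (Quotient.mk (projectivizationSetoid K V) '' (Subtype.val ⁻¹' W)) =
      ⋃ c : Kˣ, Subtype.val ⁻¹' ((c • ·) ⁻¹' W) := by
    ext v
    simp only [mem_preimage, mem_image, mem_iUnion, Quotient.eq]
    constructor
    · rintro ⟨u, hu, c, hc⟩
      exact ⟨c, by simpa [hc] using hu⟩
    · rintro ⟨c, hc⟩
      exact ⟨⟨c • (v : V), (smul_ne_zero_iff_ne c).mpr v.2⟩, hc, c, rfl⟩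
  change IsOpen (Quotient.mk (projectivizationSetoid K V) ⁻¹' _)
  rw [this]
  exact isOpen_iUnion fun c =>
    (hW.preimage (continuous_const_smul c)).preimage continuous_subtype_val

end OpenQuotient

theorem t2Space_prod {K : Type*} [Field K] [TopologicalSpace K] [ContinuousMul K] [T2Space K] :
    T2Space (Quotient (projectivizationSetoid K (K × K))) := by
  rw [t2Space_iff_of_isOpenQuotientMap isOpenQuotientMap_quotientMk]
  have : {q : {v : K × K // v ≠ 0} × {v : K × K // v ≠ 0} | ⟦q.1⟧ = ⟦q.2⟧} =
      {q | q.1.1.1 * q.2.1.2 = q.1.1.2 * q.2.1.1} :=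
    ext fun q => mk_eq_mk_iff_mul_eq_mul q.1.2 q.2.2
  rw [this]
  exact isClosed_eq (by fun_prop) (by fun_prop)

end Projectivization

instance : T2Space (ℙ ℂ (ℂ × ℂ)) := Projectivization.t2Space_prod

theorem Continuous.exists_homeomorph_quot {X Y : Type*} [TopologicalSpace X] [CompactSpace X]
    [TopologicalSpace Y] [T2Space Y] {f : X → Y} {r : X → X → Prop} (hf : Continuous f)
    (hsurj : Surjective f) (hr : ∀ x y, f x = f y ↔ r x y) :
    ∃ e : Quot r ≃ₜ Y, ∀ x, e (Quot.mk r x) = f x := by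
  let F : Quot r → Y := Quot.lift f fun x y h => (hr x y).2 h
  have hF : Bijective F := by
    refine ⟨?_, fun y => (hsurj y).imp' (Quot.mk r) fun x hx => hx⟩
    rintro ⟨x⟩ ⟨y⟩ h
    exact Quot.sound ((hr x y).1 h)
  have hcont : Continuous (Equiv.ofBijective F hF) := continuous_quot_lift _ hf
  exact ⟨hcont.homeoOfEquivCompactToT2, fun x => rfl⟩

theorem exists_sq_eq_and_cube_eq {K : Type*} [Field K] {u v : K} (h : u ^ 3 = v ^ 2) :
    ∃ t, t ^ 2 = u ∧ t ^ 3 = v := by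
  rcases eq_or_ne u 0 with rfl | hu
  · have hv : v = 0 := (pow_eq_zero_iff two_ne_zero).mp (by rw [← h]; ring)
    exact ⟨0, by simp, by simp [hv]⟩
  · refine ⟨v / u, ?_, ?_⟩
    · field_simp
      linear_combination -h
    · have hv : v ≠ 0 := by rintro rfl; simp_all
      field_simp
      exact h.symm

theorem cube_mul_sq_eq_iff_exists {K : Type*} [Field K] [IsAlgClosed K] {a b a' b' : K}
    (hab : (a, b) ≠ 0) :
    a ^ 3 * b' ^ 2 = b ^ 2 * a' ^ 3 ↔ ∃ t, a' = t ^ 2 * a ∧ b' = t ^ 3 * b := by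
  refine ⟨fun h => ?_, fun ⟨t, ha', hb'⟩ => by rw [ha', hb']; ring⟩
  rcases eq_or_ne a 0 with rfl | ha
  · have hb : b ≠ 0 := fun hb => hab (by simp [hb])
    obtain ⟨t, ht⟩ := IsAlgClosed.exists_pow_nat_eq (b' / b) three_pos
    refine ⟨t, ?_, by rw [ht, div_mul_cancel₀ _ hb]⟩
    simpa [hb] using h.symm
  rcases eq_or_ne b 0 with rfl | hb
  · obtain ⟨t, ht⟩ := IsAlgClosed.exists_pow_nat_eq (a' / a) two_pos
    refine ⟨t, by rw [ht, div_mul_cancel₀ _ ha], ?_⟩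
    simpa [ha] using h
  obtain ⟨t, ht₂, ht₃⟩ := exists_sq_eq_and_cube_eq (u := a' / a) (v := b' / b) (by
    field_simp
    linear_combination -h)
  exact ⟨t, by rw [ht₂, div_mul_cancel₀ _ ha], by rw [ht₃, div_mul_cancel₀ _ hb]⟩

section WeightedPowers

variable {A B : ℝ} {m n : ℕ}

theorem strictMonoOn_mul_pow_add_mul_pow (hA : 0 ≤ A) (hB : 0 ≤ B) (hAB : 0 < A + B)
    (hm : m ≠ 0) (hn : n ≠ 0) :
    StrictMonoOn (fun t : ℝ => A * t ^ m + B * t ^ n) (Ici 0) := by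
  intro s hs t ht hst
  have hm' := pow_left_strictMonoOn₀ hm hs ht hst
  have hn' := pow_left_strictMonoOn₀ hn hs ht hst
  rcases hA.lt_or_eq with hA | rfl
  · linarith [mul_lt_mul_of_pos_left hm' hA, mul_le_mul_of_nonneg_left hn'.le hB]
  · simpa using mul_lt_mul_of_pos_left hn' (by simpa using hAB)

theorem exists_mul_pow_add_mul_pow_eq_one (hA : 0 ≤ A) (hB : 0 ≤ B) (hAB : 0 < A + B)
    (hm : m ≠ 0) (hn : n ≠ 0) : ∃ t, 0 ≤ t ∧ A * t ^ m + B * t ^ n = 1 := by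
  set T := 1 + 1 / (A + B)
  have hT : 1 ≤ T := le_add_of_nonneg_right (by positivity)
  have hφT : 1 ≤ A * T ^ m + B * T ^ n := by
    calc 1 ≤ (A + B) * T := by rw [mul_add, mul_one_div_cancel hAB.ne']; linarith
      _ ≤ A * T ^ m + B * T ^ n := by
        nlinarith [mul_le_mul_of_nonneg_left (le_self_pow₀ hT hm) hA,
          mul_le_mul_of_nonneg_left (le_self_pow₀ hT hn) hB]
  obtain ⟨t, ht, hφt⟩ := intermediate_value_Icc (zero_le_one.trans hT)
    (by fun_prop : Continuous fun t : ℝ => A * t ^ m + B * t ^ n).continuousOn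
    ⟨by simp [hm, hn], hφT⟩
  exact ⟨t, ht.1, hφt⟩

end WeightedPowers

theorem norm_sq_mul_add_norm_sq_mul {𝕜 : Type*} [NormedDivisionRing 𝕜] (t a b : 𝕜) :
    ‖t ^ 2 * a‖ ^ 2 + ‖t ^ 3 * b‖ ^ 2 = ‖a‖ ^ 2 * ‖t‖ ^ 4 + ‖b‖ ^ 2 * ‖t‖ ^ 6 := by
  simp only [norm_mul, norm_pow]
  ring

namespace Sphere3

theorem ne_zero {p : ℂ × ℂ} (hp : p ∈ Sphere3) : p ≠ 0 := by
  rintro rfl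
  simp [Sphere3] at hp

theorem norm_eq_one_of_sq_mul_cube_mul_mem {a b t : ℂ} (hp : (a, b) ∈ Sphere3)
    (hq : (t ^ 2 * a, t ^ 3 * b) ∈ Sphere3) : ‖t‖ = 1 := by
  simp only [Sphere3, mem_ofPred_eq, norm_sq_mul_add_norm_sq_mul] at hp hq
  refine (strictMonoOn_mul_pow_add_mul_pow (sq_nonneg _) (sq_nonneg _) (hp ▸ one_pos)
    four_ne_zero (by norm_num : 6 ≠ 0)).injOn (norm_nonneg t) (mem_Ici.2 zero_le_one) ?_
  simp [hp, hq]

instance : CompactSpace Sphere3 := by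
  refine isCompact_iff_compactSpace.mp <| (isCompact_closedBall (0 : ℂ × ℂ) 1).of_isClosed_subset
    (isClosed_eq (by fun_prop) continuous_const) fun p hp => ?_
  have hp : ‖p.1‖ ^ 2 + ‖p.2‖ ^ 2 = 1 := hp
  rw [mem_closedBall_zero_iff, norm_prod_le_iff]
  constructor <;> nlinarith [norm_nonneg p.1, norm_nonneg p.2]

end Sphere3

theorem Prod.cube_sq_ne_zero {R : Type*} [MonoidWithZero R] [NoZeroDivisors R] {p : R × R}
    (hp : p ≠ 0) : (p.1 ^ 3, p.2 ^ 2) ≠ 0 := by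
  contrapose! hp
  simp_all [Prod.ext_iff]

noncomputable def weightedHopfMap (p : Sphere3) : ℙ ℂ (ℂ × ℂ) :=
  Projectivization.mk ℂ ((p : ℂ × ℂ).1 ^ 3, (p : ℂ × ℂ).2 ^ 2)
    (Prod.cube_sq_ne_zero (Sphere3.ne_zero p.2))

theorem continuous_weightedHopfMap : Continuous weightedHopfMap :=
  continuous_quot_mk.comp (by fun_prop)

theorem weightedHopfMap_surjective : Surjective weightedHopfMap := by
  intro z
  induction z using Projectivization.ind with | h w hw => ?_
  obtain ⟨a, ha⟩ := IsAlgClosed.exists_pow_nat_eq w.1 three_pos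
  obtain ⟨b, hb⟩ := IsAlgClosed.exists_pow_nat_eq w.2 two_pos
  have hab : 0 < ‖a‖ ^ 2 + ‖b‖ ^ 2 := by
    have : a ≠ 0 ∨ b ≠ 0 := by
      contrapose! hw
      simp [Prod.ext_iff, ← ha, ← hb, hw.1, hw.2]
    rcases this with h | h <;> positivity
  obtain ⟨t, ht, hφt⟩ := exists_mul_pow_add_mul_pow_eq_one (sq_nonneg ‖a‖) (sq_nonneg ‖b‖) hab
    four_ne_zero (by norm_num : 6 ≠ 0)
  refine ⟨⟨((t : ℂ) ^ 2 * a, (t : ℂ) ^ 3 * b), ?_⟩, ?_⟩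
  · change ‖_‖ ^ 2 + ‖_‖ ^ 2 = 1
    rw [norm_sq_mul_add_norm_sq_mul, Complex.norm_real, Real.norm_of_nonneg ht, hφt]
  · refine (Projectivization.mk_eq_mk_iff_mul_eq_mul _ _).mpr ?_
    rw [← ha, ← hb]
    ring

theorem weightedHopfMap_eq_iff (p q : Sphere3) :
    weightedHopfMap p = weightedHopfMap q ↔ SameOrbit p q := by
  obtain ⟨⟨a, b⟩, hp⟩ := p
  obtain ⟨⟨a', b'⟩, hq⟩ := q
  rw [weightedHopfMap, weightedHopfMap, Projectivization.mk_eq_mk_iff_mul_eq_mul,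
    cube_mul_sq_eq_iff_exists (Sphere3.ne_zero hp)]
  simp only [SameOrbit, Prod.mk.injEq]
  constructor
  · rintro ⟨t, rfl, rfl⟩
    exact ⟨t, Sphere3.norm_eq_one_of_sq_mul_cube_mul_mem hp hq, rfl, rfl⟩
  · exact fun ⟨t, _, h⟩ => ⟨t, h⟩

/-- The map `(a,b) ↦ [a³ : b²]` from `S³` to `ℂP¹` is well defined, continuous
and surjective, its fibers are exactly the orbits of the circle action
`ζ·(a,b) = (ζ²a, ζ³b)`, and it induces a homeomorphism `S³/S¹ ≅ ℂP¹`. -/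
theorem sphere_to_projective_line :
    ∃ f : Sphere3 → ℙ ℂ (ℂ × ℂ),
      (∀ (p : Sphere3) (h : ((p : ℂ × ℂ).1 ^ 3, (p : ℂ × ℂ).2 ^ 2) ≠ (0 : ℂ × ℂ)),
        f p = Projectivization.mk ℂ ((p : ℂ × ℂ).1 ^ 3, (p : ℂ × ℂ).2 ^ 2) h) ∧
      Continuous f ∧ Function.Surjective f ∧
      (∀ p q : Sphere3, f p = f q ↔ SameOrbit p q) ∧
      ∃ e : Quot SameOrbit ≃ₜ ℙ ℂ (ℂ × ℂ), ∀ p : Sphere3, e (Quot.mk _ p) = f p :=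
  ⟨weightedHopfMap, fun _ _ => rfl, continuous_weightedHopfMap, weightedHopfMap_surjective,
    weightedHopfMap_eq_iff, continuous_weightedHopfMap.exists_homeomorph_quot
      weightedHopfMap_surjective weightedHopfMap_eq_iff⟩
end
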